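/- If a subset I ⊆ [K] satisfies rank([F_I; G_I]) = rank(F_I) + N but the columns of [F_I; G_I] are linearly dependent (i.e., |I| > rank([F_I; G_I])), then there exists a nonempty subset J ⊆ I such that the set I \ J also satisfies the rank-increment condition rank([F_{I\J}; G_{I\J}]) = rank(F_{I\J}) + N. -/

import Mathlib

/-!
Dependent stacked columns mean some column `c ∈ I` of `[F; G]` lies in the span of the other
stacked columns over `I`. Projecting to the `F`-rows, the column `c` of `F` also lies in the span
of the other columns of `F`. Removing `c` therefore changes neither column span, so both ranks,
and with them the rank-increment condition, survive with `J = {c}`.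
-/

/-- The submatrix of `A` formed by the columns indexed by the subset `I`. -/
def colSub {𝔽 : Type*} {M K : ℕ} (A : Matrix (Fin M) (Fin K) 𝔽) (I : Finset (Fin K)) :
    Matrix (Fin M) {x // x ∈ I} 𝔽 :=
  A.submatrix id Subtype.val

open Submodule Module Matrix

section

variable {𝔽 m ι : Type*} [Field 𝔽]

lemma rank_submatrix_val_eq_finrank_span (A : Matrix m ι 𝔽) (I : Finset ι) :
    (A.submatrix id ((↑) : I → ι)).rank = finrank 𝔽 (span 𝔽 (A.col '' ↑I)) := by
  rw [rank_eq_finrank_span_cols, Set.image_eq_range]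
  rfl

lemma rank_submatrix_erase_of_mem_span [DecidableEq ι] (A : Matrix m ι 𝔽) {I : Finset ι}
    {c : ι} (hc : c ∈ I) (hspan : A.col c ∈ span 𝔽 (A.col '' ↑(I.erase c))) :
    (A.submatrix id ((↑) : I.erase c → ι)).rank = (A.submatrix id ((↑) : I → ι)).rank := by
  rw [rank_submatrix_val_eq_finrank_span, rank_submatrix_val_eq_finrank_span,
    ← span_insert_eq_span hspan, ← Set.image_insert_eq, ← Finset.coe_insert, Finset.insert_erase hc]

lemma exists_mem_span_erase_of_rank_lt [Fintype m] [DecidableEq ι] (A : Matrix m ι 𝔽)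
    {I : Finset ι} (h : (A.submatrix id ((↑) : I → ι)).rank < I.card) :
    ∃ c ∈ I, A.col c ∈ span 𝔽 (A.col '' ↑(I.erase c)) := by
  have hdep : ¬ LinearIndepOn 𝔽 A.col ↑I := fun hli => h.ne <| by
    rw [← rank_transpose, hli.rank_matrix (M := (A.submatrix id ((↑) : I → ι))ᵀ),
      Fintype.card_coe]
  simp only [linearIndepOn_iff_notMem_span, not_forall, not_not] at hdep
  obtain ⟨c, hc, hspan⟩ := hdep
  exact ⟨c, hc, by rwa [Finset.coe_erase]⟩

end

lemma col_mem_span_of_fromRows_col_mem_span {𝔽 m₁ m₂ ι : Type*} [Field 𝔽] (F : Matrix m₁ ι 𝔽)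
    (G : Matrix m₂ ι 𝔽) {c : ι} {s : Set ι}
    (h : (fromRows F G).col c ∈ span 𝔽 ((fromRows F G).col '' s)) :
    F.col c ∈ span 𝔽 (F.col '' s) := by
  have := mem_map_of_mem (f := LinearMap.funLeft 𝔽 𝔽 Sum.inl) h
  rwa [map_span, ← Set.image_comp] at this

lemma fromRows_submatrix_id {α m₁ m₂ ι κ : Type*} (F : Matrix m₁ ι α) (G : Matrix m₂ ι α)
    (f : κ → ι) :
    fromRows (F.submatrix id f) (G.submatrix id f) = (fromRows F G).submatrix id f := by
  ext (i | i) j <;> rfl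

theorem exists_removable_subset_general
    {𝔽 : Type*} [Field 𝔽] {M N K : ℕ}
    (F : Matrix (Fin M) (Fin K) 𝔽) (G : Matrix (Fin N) (Fin K) 𝔽)
    (I : Finset (Fin K))
    (hI : (Matrix.fromRows (colSub F I) (colSub G I)).rank = (colSub F I).rank + N)
    (hdep : (Matrix.fromRows (colSub F I) (colSub G I)).rank < I.card) :
    ∃ J : Finset (Fin K), J.Nonempty ∧ J ⊆ I ∧
      (Matrix.fromRows (colSub F (I \ J)) (colSub G (I \ J))).rank
        = (colSub F (I \ J)).rank + N := by
  simp only [colSub, fromRows_submatrix_id] at hI hdep ⊢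
  obtain ⟨c, hc, hspan⟩ := exists_mem_span_erase_of_rank_lt _ hdep
  refine ⟨{c}, Finset.singleton_nonempty c, Finset.singleton_subset_iff.mpr hc, ?_⟩
  rw [Finset.sdiff_singleton_eq_erase, rank_submatrix_erase_of_mem_span _ hc hspan,
    rank_submatrix_erase_of_mem_span F hc (col_mem_span_of_fromRows_col_mem_span F G hspan), hI]

/-- If `I` satisfies the rank-increment condition but the columns of
[F_I;G_I] are linearly dependent, then some nonempty `J ⊆ I` can be removed
while preserving the rank-increment condition. -/
theorem exists_removable_subset
    {𝔽 : Type*} [Field 𝔽] [Fintype 𝔽] {M N K : ℕ}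
    (F : Matrix (Fin M) (Fin K) 𝔽) (G : Matrix (Fin N) (Fin K) 𝔽)
    (I : Finset (Fin K))
    (hI : (Matrix.fromRows (colSub F I) (colSub G I)).rank = (colSub F I).rank + N)
    (hdep : (Matrix.fromRows (colSub F I) (colSub G I)).rank < I.card) :
    ∃ J : Finset (Fin K), J.Nonempty ∧ J ⊆ I ∧
      (Matrix.fromRows (colSub F (I \ J)) (colSub G (I \ J))).rank
        = (colSub F (I \ J)).rank + N :=
  exists_removable_subset_general F G I hI hdep
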